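/- arXiv:math/0411081 — 2 statements merged into one kernel-verified Lean document; each statement's English description precedes it below -/
import Mathlib

section
/- Let R > 0, let f be holomorphic on the disk {z ∈ ℂ : |z| < R} with f(0) = 0 and f′(0) ≠ 0, and let m₁, …, m_r ∈ ℂ be nonzero. Then there exist ε > 0 with max(1,|m₁|,…,|m_r|)·ε < R and δ > 0 such that: f′ has no zero on {|z| ≤ ε}, f has no zero on {0 < |z| ≤ ε}, for every t ∈ ℂ with 0 < |t| < δ there is a unique point g(t) with |g(t)| < ε and f(g(t)) = t, and the series ∑_{n=r}^∞ tⁿ · (1/(2πi)) ∮_{|z|=ε} f(m₁z)⋯f(m_r z)/f(z)^{n+1} dz converges with sum equal to f(m₁·g(t))⋯f(m_r·g(t))/f′(g(t)). -/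
open Complex Metric

/-!
Choose `ε` so small that `f` is injective with nonvanishing derivative on the closed disc
`|z| ≤ ε`, and `δ` below the minimum of `|f|` on the circle `|z| = ε` and so small that every
`|t| < δ` has a preimage `g` in the disc. On the circle `∑ tⁿ / f^(n+1) = 1 / (f - t)` converges
uniformly, so the full series of residues sums to `(2πi)⁻¹ ∮ H / (f - t)` with `H z = ∏ f (mᵢ z)`.
Since `f z - t = (z - g) · dslope f g z` with `dslope f g` zero-free on the disc, Cauchy's formula
evaluates this integral as `H g / f' g`. The terms `n < r` vanish: `H` has a zero of order `r` at
`0`, while `f ^ (n + 1)` has one of order exactly `n + 1`.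
-/

open Set Filter Topology
open scoped Real

section DSlope

variable {𝕜 E : Type*} [NontriviallyNormedField 𝕜] [NormedAddCommGroup E] [NormedSpace 𝕜 E]

theorem dslope_ne_zero_of_injOn {f : 𝕜 → E} {s : Set 𝕜} {a b : 𝕜} (hinj : InjOn f s)
    (ha : a ∈ s) (hb : b ∈ s) (hf' : deriv f a ≠ 0) : dslope f a b ≠ 0 := by
  rcases eq_or_ne b a with rfl | hba
  · rwa [dslope_same]
  · rw [dslope_of_ne f hba, slope_def_module]
    exact smul_ne_zero (inv_ne_zero (sub_ne_zero.2 hba))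
      (sub_ne_zero.2 fun h => hba (hinj hb ha h))

theorem mul_dslope_zero {f : 𝕜 → 𝕜} (hf0 : f 0 = 0) (z : 𝕜) : z * dslope f 0 z = f z := by
  simpa [hf0] using sub_smul_dslope f 0 z

theorem prod_comp_mul_eq_pow_mul_prod_dslope {ι : Type*} [Fintype ι] {f : 𝕜 → 𝕜}
    (hf0 : f 0 = 0) (m : ι → 𝕜) (z : 𝕜) :
    ∏ i, f (m i * z) = z ^ Fintype.card ι * ∏ i, m i * dslope f 0 (m i * z) := by
  simp_rw [← mul_dslope_zero hf0 (m _ * z), mul_assoc, mul_left_comm (m _) z]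
  rw [Finset.prod_mul_distrib, Finset.prod_const, Finset.card_univ]

end DSlope

theorem HasStrictDerivAt.exists_mem_nhds_injOn {𝕜 : Type*} [NontriviallyNormedField 𝕜]
    [CompleteSpace 𝕜] {f : 𝕜 → 𝕜} {f' a : 𝕜} (hf : HasStrictDerivAt f f' a) (hf' : f' ≠ 0) :
    ∃ V ∈ 𝓝 a, InjOn f V :=
  ⟨_, hf.eventually_left_inverse hf', fun _ hx _ hy hxy => hx.symm.trans (hxy ▸ hy)⟩

theorem AnalyticAt.eventually_injOn_closedBall_and_deriv_ne_zero {𝕜 : Type*}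
    [NontriviallyNormedField 𝕜] [CompleteSpace 𝕜] {f : 𝕜 → 𝕜} {a : 𝕜} (hf : AnalyticAt 𝕜 f a)
    (hf' : deriv f a ≠ 0) :
    ∀ᶠ ε in 𝓝 (0 : ℝ), InjOn f (closedBall a ε) ∧ ∀ z ∈ closedBall a ε, deriv f z ≠ 0 := by
  obtain ⟨V, hV, hinj⟩ := hf.hasStrictDerivAt.exists_mem_nhds_injOn hf'
  have hderiv : {z | deriv f z ≠ 0} ∈ 𝓝 a := hf.deriv.continuousAt.eventually_ne hf'
  filter_upwards [eventually_closedBall_subset (inter_mem hV hderiv)] with ε hε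
  exact ⟨hinj.mono (hε.trans inter_subset_left), fun z hz => (hε hz).2⟩

theorem AnalyticAt.exists_radius_injOn_closedBall {𝕜 ι : Type*} [NontriviallyNormedField 𝕜]
    [CompleteSpace 𝕜] [Finite ι] {f : 𝕜 → 𝕜} {R : ℝ} (hf : AnalyticAt 𝕜 f 0)
    (hf' : deriv f 0 ≠ 0) (hR : 0 < R) (m : ι → 𝕜) :
    ∃ ε > 0, ε < R ∧ (∀ i, max 1 ‖m i‖ * ε < R) ∧
      InjOn f (closedBall 0 ε) ∧ ∀ z ∈ closedBall 0 ε, deriv f z ≠ 0 := by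
  have hmR : ∀ i, ∀ᶠ ε in 𝓝 (0 : ℝ), max 1 ‖m i‖ * ε < R := fun i =>
    ((continuous_const_mul _).tendsto' 0 0 (mul_zero _)).eventually_lt_const hR
  exact (eventually_mem_nhdsWithin (s := Ioi 0).and <| nhdsWithin_le_nhds <|
    (eventually_lt_nhds hR).and <| (eventually_all.2 hmR).and <|
      hf.eventually_injOn_closedBall_and_deriv_ne_zero hf').exists

theorem mapsTo_const_mul_closedBall_ball {𝕜 : Type*} [NormedField 𝕜] {a : 𝕜} {ε R : ℝ}
    (h : ‖a‖ * ε < R) : MapsTo (a * ·) (closedBall 0 ε) (ball 0 R) := fun z hz => by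
  rw [mem_ball_zero_iff, norm_mul]
  exact (mul_le_mul_of_nonneg_left (mem_closedBall_zero_iff.1 hz) (norm_nonneg a)).trans_lt h

namespace circleIntegral

theorem hasSum_of_norm_le {E ι : Type*} [NormedAddCommGroup E] [NormedSpace ℂ E] [Countable ι]
    {F : ι → ℂ → E} {G : ℂ → E} {c : ℂ} {R : ℝ}
    (hF : ∀ i, CircleIntegrable (F i) c R) {b : ι → ℝ} (hb : Summable b)
    (hFb : ∀ i, ∀ z ∈ sphere c |R|, ‖F i z‖ ≤ b i)
    (hFG : ∀ z ∈ sphere c |R|, HasSum (F · z) (G z)) :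
    HasSum (fun i => ∮ z in C(c, R), F i z) (∮ z in C(c, R), G z) := by
  refine intervalIntegral.hasSum_integral_of_dominated_convergence (fun i _ => |R| * b i)
    (fun i => ?_) (fun i => .of_forall fun θ _ => ?_) (.of_forall fun _ _ => hb.mul_left _)
    intervalIntegrable_const
    (.of_forall fun θ _ => (hFG _ (circleMap_mem_sphere' c R θ)).const_smul _)
  · simp only [deriv_circleMap]
    exact ((continuous_circleMap 0 R).mul continuous_const).aestronglyMeasurable.smul
      (hF i).def'.1
  · rw [norm_smul, deriv_circleMap, norm_mul, norm_circleMap_zero, norm_I, mul_one]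
    exact mul_le_mul_of_nonneg_left (hFb i _ (circleMap_mem_sphere' c R θ)) (abs_nonneg R)

theorem hasSum_pow_mul_div_pow {H F : ℂ → ℂ} {c t : ℂ} {R δ : ℝ}
    (hH : ContinuousOn H (sphere c |R|)) (hF : ContinuousOn F (sphere c |R|))
    (hFδ : ∀ z ∈ sphere c |R|, δ ≤ ‖F z‖) (ht : ‖t‖ < δ) :
    HasSum (fun k : ℕ => t ^ k * ∮ z in C(c, R), H z / F z ^ (k + 1))
      (∮ z in C(c, R), H z / (F z - t)) := by
  have hδ : 0 < δ := (norm_nonneg t).trans_lt ht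
  have hF0 : ∀ z ∈ sphere c |R|, F z ≠ 0 := fun z hz =>
    norm_pos_iff.1 (hδ.trans_le (hFδ z hz))
  obtain ⟨M, hM⟩ := (isCompact_sphere c |R|).exists_bound_of_continuousOn hH
  simp_rw [← integral_const_mul]
  refine hasSum_of_norm_le (fun k => ?_)
    ((summable_geometric_of_lt_one (by positivity) ((div_lt_one hδ).2 ht)).mul_left (M / δ))
    (fun k z hz => ?_) (fun z hz => ?_)
  · exact (continuousOn_const.mul
      (hH.div (hF.pow _) fun z hz => pow_ne_zero _ (hF0 z hz))).circleIntegrable'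
  · rw [norm_mul, norm_div, norm_pow, norm_pow]
    calc ‖t‖ ^ k * (‖H z‖ / ‖F z‖ ^ (k + 1)) ≤ ‖t‖ ^ k * (M / δ ^ (k + 1)) := by
          gcongr
          exacts [(norm_nonneg _).trans (hM z hz), hM z hz, hFδ z hz]
      _ = M / δ * (‖t‖ / δ) ^ k := by rw [div_pow, pow_succ]; field_simp
  · have hFz := hFδ z hz
    have hF0z := hF0 z hz
    have hFt : F z - t ≠ 0 := sub_ne_zero.2 fun h => ht.not_ge (h ▸ hFz)
    have hq : ‖t / F z‖ < 1 := by
      rw [norm_div, div_lt_one (hδ.trans_le hFz)]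
      exact ht.trans_le hFz
    have hsum := (hasSum_geometric_of_norm_lt_one hq).mul_left (H z / F z)
    rw [show H z / F z * (1 - t / F z)⁻¹ = H z / (F z - t) by field_simp] at hsum
    have hterm :
        (fun k : ℕ => t ^ k * (H z / F z ^ (k + 1))) = fun k => H z / F z * (t / F z) ^ k := by
      funext k
      ring
    rwa [hterm]

end circleIntegral

theorem circleIntegral_div_sub_eq_of_injOn {f H : ℂ → ℂ} {c g : ℂ} {R : ℝ}
    (hf : DifferentiableOn ℂ f (closedBall c R)) (hH : DifferentiableOn ℂ H (closedBall c R))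
    (hinj : InjOn f (closedBall c R)) (hg : g ∈ ball c R) (hf' : deriv f g ≠ 0) :
    ∮ z in C(c, R), H z / (f z - f g) = 2 * π * I * (H g / deriv f g) := by
  have hR : 0 < R := pos_of_mem_ball hg
  have hψ : DifferentiableOn ℂ (dslope f g) (closedBall c R) :=
    (Complex.differentiableOn_dslope (closedBall_mem_nhds_of_mem hg)).2 hf
  have hψ0 : ∀ z ∈ closedBall c R, dslope f g z ≠ 0 := fun z hz =>
    dslope_ne_zero_of_injOn hinj (ball_subset_closedBall hg) hz hf'
  have hcauchy := ((hH.div hψ hψ0).diffContOnCl_ball subset_rfl).circleIntegral_sub_inv_smul hg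
  simp only [Pi.div_apply, smul_eq_mul, dslope_same] at hcauchy
  rw [← hcauchy]
  refine circleIntegral.integral_congr hR.le fun z _ => ?_
  rw [← sub_smul_dslope f g z, smul_eq_mul, div_eq_mul_inv, mul_inv]
  ring

theorem hasSum_pow_mul_two_pi_I_inv_circleIntegral_div_pow {f H : ℂ → ℂ} {c g : ℂ}
    {R δ : ℝ}
    (hf : DifferentiableOn ℂ f (closedBall c R)) (hH : DifferentiableOn ℂ H (closedBall c R))
    (hinj : InjOn f (closedBall c R)) (hg : g ∈ ball c R) (hf' : deriv f g ≠ 0)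
    (hfδ : ∀ z ∈ sphere c R, δ ≤ ‖f z‖) (hgδ : ‖f g‖ < δ) :
    HasSum (fun k : ℕ => f g ^ k * ((2 * π * I)⁻¹ * ∮ z in C(c, R), H z / f z ^ (k + 1)))
      (H g / deriv f g) := by
  have hR : |R| = R := abs_of_pos (pos_of_mem_ball hg)
  have hS : sphere c |R| ⊆ closedBall c R := by rw [hR]; exact sphere_subset_closedBall
  rw [← hR] at hfδ
  have hsum := circleIntegral.hasSum_pow_mul_div_pow (hH.continuousOn.mono hS)
    (hf.continuousOn.mono hS) hfδ hgδ
  rw [circleIntegral_div_sub_eq_of_injOn hf hH hinj hg hf'] at hsum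
  simpa only [mul_left_comm _ (f g ^ _), inv_mul_cancel_left₀ two_pi_I_ne_zero]
    using hsum.mul_left (2 * π * I)⁻¹

theorem circleIntegral_pow_mul_div_pow_eq_zero {K φ : ℂ → ℂ} {c : ℂ} {R : ℝ} {k n : ℕ}
    (hR : 0 ≤ R) (hK : DifferentiableOn ℂ K (closedBall c R))
    (hφ : DifferentiableOn ℂ φ (closedBall c R)) (hφ0 : ∀ z ∈ closedBall c R, φ z ≠ 0)
    (hkn : k ≤ n) : ∮ z in C(c, R), (z - c) ^ n * K z / ((z - c) * φ z) ^ k = 0 := by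
  rcases hR.eq_or_lt with rfl | hR
  · exact circleIntegral.integral_radius_zero _ _
  obtain ⟨j, rfl⟩ := Nat.exists_eq_add_of_le hkn
  have hreg : DifferentiableOn ℂ (fun z => (z - c) ^ j * K z / φ z ^ k) (closedBall c R) :=
    (((differentiableOn_id.sub_const c).pow _).mul hK).div (hφ.pow k)
      fun z hz => pow_ne_zero k (hφ0 z hz)
  rw [circleIntegral.integral_congr hR.le (g := fun z => (z - c) ^ j * K z / φ z ^ k)]
  · exact (hreg.diffContOnCl_ball subset_rfl).circleIntegral_eq_zero hR.le
  intro z hz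
  have hzc : z - c ≠ 0 := sub_ne_zero.2 (ne_of_mem_sphere hz hR.ne')
  have hφz := hφ0 z (sphere_subset_closedBall hz)
  dsimp only
  rw [pow_add, mul_pow]
  field_simp

theorem circleIntegral_prod_comp_mul_div_pow_eq_zero {ι : Type*} [Fintype ι] {f : ℂ → ℂ}
    {U : Set ℂ} {R : ℝ} (m : ι → ℂ) (hU : IsOpen U) (hf : DifferentiableOn ℂ f U)
    (hRU : closedBall 0 R ⊆ U) (hmU : ∀ i, MapsTo (m i * ·) (closedBall 0 R) U) (hR : 0 ≤ R)
    (hf0 : f 0 = 0) (hinj : InjOn f (closedBall 0 R)) (hf' : deriv f 0 ≠ 0) {k : ℕ}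
    (hk : k < Fintype.card ι) :
    ∮ z in C(0, R), (∏ i, f (m i * z)) / f z ^ (k + 1) = 0 := by
  have hφ : DifferentiableOn ℂ (dslope f 0) U :=
    (Complex.differentiableOn_dslope (hU.mem_nhds (hRU (mem_closedBall_self hR)))).2 hf
  have hK : DifferentiableOn ℂ (fun z => ∏ i, m i * dslope f 0 (m i * z)) (closedBall 0 R) :=
    .fun_finsetProd fun i _ => (hφ.comp (differentiableOn_id.const_mul (m i)) (hmU i)).const_mul _
  have := circleIntegral_pow_mul_div_pow_eq_zero hR hK (hφ.mono hRU)
    (fun z hz => dslope_ne_zero_of_injOn hinj (mem_closedBall_self hR) hz hf') hk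
  simpa only [sub_zero, mul_dslope_zero hf0, ← prod_comp_mul_eq_pow_mul_prod_dslope hf0]
    using this

theorem elliptic_genera_residue_lemma_general_general
    (R : ℝ) (hR : 0 < R) (f : ℂ → ℂ)
    (hf : DifferentiableOn ℂ f (ball (0 : ℂ) R))
    (hf0 : f 0 = 0) (hf'0 : deriv f 0 ≠ 0)
    (r : ℕ) (m : Fin r → ℂ) :
    ∃ ε > (0 : ℝ), (∀ i, max 1 ‖m i‖ * ε < R) ∧ ∃ δ > (0 : ℝ),
      (∀ z : ℂ, ‖z‖ ≤ ε → deriv f z ≠ 0) ∧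
      (∀ z : ℂ, z ≠ 0 → ‖z‖ ≤ ε → f z ≠ 0) ∧
      ∀ t : ℂ, 0 < ‖t‖ → ‖t‖ < δ →
        ∃ g : ℂ, (‖g‖ < ε ∧ f g = t) ∧
          (∀ z : ℂ, ‖z‖ < ε → f z = t → z = g) ∧
          HasSum
            (fun n : ℕ =>
              t ^ (n + r) *
                ((2 * (Real.pi : ℂ) * I)⁻¹ *
                  ∮ z in C(0, ε), (∏ i, f (m i * z)) / (f z) ^ (n + r + 1)))
            ((∏ i, f (m i * g)) / deriv f g) := by
  have hfa : AnalyticAt ℂ f 0 := hf.analyticAt (ball_mem_nhds 0 hR)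
  obtain ⟨ε, hε, hεR, hεm, hinj, hderiv⟩ := hfa.exists_radius_injOn_closedBall hf'0 hR m
  have hεU : closedBall (0 : ℂ) ε ⊆ ball 0 R := closedBall_subset_ball hεR
  have hmU : ∀ i, MapsTo (m i * ·) (closedBall 0 ε) (ball 0 R) := fun i =>
    mapsTo_const_mul_closedBall_ball
      ((mul_le_mul_of_nonneg_right (le_max_right _ _) hε.le).trans_lt (hεm i))
  have hfne : ∀ z ∈ closedBall (0 : ℂ) ε, z ≠ 0 → f z ≠ 0 := fun z hz hz0 =>
    hf0 ▸ hinj.ne hz (mem_closedBall_self hε.le) hz0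
  obtain ⟨δ₁, hδ₁, hfδ₁⟩ := (isCompact_sphere (0 : ℂ) ε).exists_forall_le'
    (hf.continuousOn.mono (sphere_subset_closedBall.trans hεU)).norm fun z hz =>
      norm_pos_iff.2 (hfne z (sphere_subset_closedBall hz) (ne_of_mem_sphere hz hε.ne'))
  obtain ⟨δ₂, hδ₂, himg⟩ := Metric.mem_nhds_iff.1 <| hf0 ▸
    (hfa.hasStrictDerivAt.map_nhds_eq hf'0 ▸ image_mem_map (ball_mem_nhds 0 hε))
  refine ⟨ε, hε, hεm, min δ₁ δ₂, lt_min hδ₁ hδ₂,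
    fun z hz => hderiv z (mem_closedBall_zero_iff.2 hz),
    fun z hz0 hz => hfne z (mem_closedBall_zero_iff.2 hz) hz0, fun t _ ht => ?_⟩
  obtain ⟨g, hg, rfl⟩ := himg (mem_ball_zero_iff.2 (ht.trans_le (min_le_right _ _)))
  refine ⟨g, ⟨mem_ball_zero_iff.1 hg, rfl⟩, fun z hz hfz =>
    hinj (ball_subset_closedBall (mem_ball_zero_iff.2 hz)) (ball_subset_closedBall hg) hfz, ?_⟩
  have hH : DifferentiableOn ℂ (fun z => ∏ i, f (m i * z)) (closedBall 0 ε) :=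
    .fun_finsetProd fun i _ => hf.comp (differentiableOn_id.const_mul (m i)) (hmU i)
  have hsum := hasSum_pow_mul_two_pi_I_inv_circleIntegral_div_pow (hf.mono hεU) hH hinj hg
    (hderiv g (ball_subset_closedBall hg)) hfδ₁ (ht.trans_le (min_le_left _ _))
  rw [← hasSum_nat_add_iff' r, Finset.sum_eq_zero fun k hk => ?_, sub_zero] at hsum
  · exact hsum
  rw [circleIntegral_prod_comp_mul_div_pow_eq_zero m isOpen_ball hf hεU hmU hε.le hf0 hinj hf'0
    (by simpa using hk), mul_zero, mul_zero]

/-- Lemma 2.5 (general case): for `f` holomorphic near `0` with `f 0 = 0`,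
`f' 0 ≠ 0` and nonzero constants `m₁, …, m_r`, the generating series of the
residues `Res_z f(m₁z)⋯f(m_r z)/f(z)^{n+1}` (starting at `n = r`) equals
`f(m₁ g(t))⋯f(m_r g(t))/f'(g(t))`, where `g` is the local inverse of `f`. -/
theorem elliptic_genera_residue_lemma_general
    (R : ℝ) (hR : 0 < R) (f : ℂ → ℂ)
    (hf : DifferentiableOn ℂ f (ball (0 : ℂ) R))
    (hf0 : f 0 = 0) (hf'0 : deriv f 0 ≠ 0)
    (r : ℕ) (hr : 1 ≤ r) (m : Fin r → ℂ) (hm : ∀ i, m i ≠ 0) :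
    ∃ ε > (0 : ℝ), (∀ i, max 1 ‖m i‖ * ε < R) ∧ ∃ δ > (0 : ℝ),
      (∀ z : ℂ, ‖z‖ ≤ ε → deriv f z ≠ 0) ∧
      (∀ z : ℂ, z ≠ 0 → ‖z‖ ≤ ε → f z ≠ 0) ∧
      ∀ t : ℂ, 0 < ‖t‖ → ‖t‖ < δ →
        ∃ g : ℂ, (‖g‖ < ε ∧ f g = t) ∧
          (∀ z : ℂ, ‖z‖ < ε → f z = t → z = g) ∧
          HasSum
            (fun n : ℕ =>
              t ^ (n + r) *
                ((2 * (Real.pi : ℂ) * I)⁻¹ *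
                  ∮ z in C(0, ε), (∏ i, f (m i * z)) / (f z) ^ (n + r + 1)))
            ((∏ i, f (m i * g)) / deriv f g) :=
  elliptic_genera_residue_lemma_general_general R hR f hf hf0 hf'0 r m
end

section
/- Fix an integer m ≥ 1 and a real ε with 0 < ε < 1/m, and for each integer N ≥ 2 set χ_N = (1/(2πi)) ∮_{|z|=ε} m(1+z)^N/(z^{N−1}(1+mz)) dz. Then there exists δ > 0 such that for every t ∈ ℂ with |t| < δ, the series ∑_{N=2}^∞ χ_N · t^{N−1} converges with sum equal to mt / ((1−t)²(1+(m−1)t)). -/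
/-!
Truncating the geometric series of `1 / (1 + m z)` at degree `n` splits the integrand into
`p(z) / z ^ (n + 1)` with `p` a polynomial, plus a multiple of `(1 + z) ^ (n + 2) / (1 + m z)`,
which is holomorphic on the closed disc because `ε < 1 / m`. So `χ_{n+2}` is the coefficient of
`z ^ n` in `p`, and the binomial theorem evaluates it to `((1 - m) ^ (n + 2) - 1 + m (n + 2)) / m`.
For `|t| < 1 / m` the generating series is then a combination of two geometric series and
`∑ n tⁿ`.
-/

open Complex Polynomial Metric Finset Real Set

theorem circleIntegral_zpow_of_pos {R : ℝ} (hR : 0 < R) (d : ℤ) :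
    (∮ z in C(0, R), z ^ d) = if d = -1 then 2 * π * I else 0 := by
  split_ifs with hd
  · simpa [hd] using circleIntegral.integral_sub_center_inv 0 hR.ne'
  · simpa using circleIntegral.integral_sub_zpow_of_ne hd 0 0 R

theorem circleIntegral_eval_div_pow_succ (p : ℂ[X]) (n : ℕ) {R : ℝ} (hR : 0 < R) :
    (∮ z in C(0, R), p.eval z / z ^ (n + 1)) = 2 * π * I * p.coeff n := by
  have hz : ∀ z ∈ sphere (0 : ℂ) R, z ≠ 0 := fun z hz =>
    ne_zero_of_mem_sphere hR.ne' ⟨z, hz⟩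
  have hexpand : EqOn (fun z => p.eval z / z ^ (n + 1))
      (fun z => ∑ k ∈ p.support, p.coeff k * z ^ ((k : ℤ) - (n + 1))) (sphere 0 R) := by
    intro z hzs
    simp only [eval_eq_sum, Polynomial.sum, Finset.sum_div, zpow_sub₀ (hz z hzs)]
    norm_cast
    simp [mul_div_assoc]
  have hint : ∀ k ∈ p.support,
      CircleIntegrable (fun z => p.coeff k * z ^ ((k : ℤ) - (n + 1))) 0 R := fun k _ =>
    ContinuousOn.circleIntegrable hR.le <|
      continuousOn_const.mul (continuousOn_id.zpow₀ _ fun z hzs => Or.inl (hz z hzs))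
  rw [circleIntegral.integral_congr hR.le hexpand, circleIntegral.integral_fun_sum hint]
  simp only [circleIntegral.integral_const_mul, circleIntegral_zpow_of_pos hR,
    show ∀ k : ℕ, (k : ℤ) - (n + 1) = -1 ↔ k = n from fun k => by omega, mul_ite, mul_zero,
    Finset.sum_ite_eq', mem_support_iff]
  split_ifs with h
  · ring
  · simp [not_not.mp h]

theorem one_add_mul_ne_zero_of_norm_le {a z : ℂ} {R : ℝ} (ha : ‖a‖ * R < 1)
    (hz : ‖z‖ ≤ R) : 1 + a * z ≠ 0 := by
  intro h
  have : ‖a * z‖ = 1 := by rw [show a * z = -1 by linear_combination h]; simp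
  rw [norm_mul] at this
  nlinarith [mul_le_mul_of_nonneg_left hz (norm_nonneg a)]

theorem circleIntegral_eval_div_one_add_mul (q : ℂ[X]) {a : ℂ} {R : ℝ} (hR : 0 ≤ R)
    (ha : ‖a‖ * R < 1) : (∮ z in C(0, R), q.eval z / (1 + a * z)) = 0 := by
  refine DiffContOnCl.circleIntegral_eq_zero hR (DifferentiableOn.diffContOnCl ?_)
  refine q.differentiable.differentiableOn.div (by fun_prop) fun z hz => ?_
  exact one_add_mul_ne_zero_of_norm_le ha
    (mem_closedBall_zero_iff.mp (closure_ball_subset_closedBall hz))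

noncomputable def truncatedNumerator (a : ℂ) (n : ℕ) : ℂ[X] :=
  C a * (1 + X) ^ (n + 2) * ∑ j ∈ range (n + 1), (C (-a) * X) ^ j

theorem div_pow_succ_mul_one_add_mul_eq {a z : ℂ} (n : ℕ) (hz : z ≠ 0)
    (haz : 1 + a * z ≠ 0) :
    a * (1 + z) ^ (n + 2) / (z ^ (n + 1) * (1 + a * z)) =
      (truncatedNumerator a n).eval z / z ^ (n + 1) +
        (C ((-a) ^ (n + 1) * a) * (1 + X) ^ (n + 2)).eval z / (1 + a * z) := by
  have hgeom := geom_sum_mul (-a * z) (n + 1)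
  simp only [truncatedNumerator, eval_mul, eval_pow, eval_add, eval_one, eval_X, eval_C,
    eval_finsetSum]
  rw [div_add_div _ _ (pow_ne_zero _ hz) haz, div_eq_div_iff (mul_ne_zero (pow_ne_zero _ hz) haz)
    (mul_ne_zero (pow_ne_zero _ hz) haz)]
  linear_combination (a * (1 + z) ^ (n + 2) * z ^ (n + 1) * (1 + a * z)) * hgeom

theorem circleIntegral_eq_coeff_truncatedNumerator (a : ℂ) (n : ℕ) {R : ℝ} (hR : 0 < R)
    (ha : ‖a‖ * R < 1) :
    (∮ z in C(0, R), a * (1 + z) ^ (n + 2) / (z ^ (n + 1) * (1 + a * z))) =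
      2 * π * I * (truncatedNumerator a n).coeff n := by
  have hz : ∀ z ∈ sphere (0 : ℂ) R, z ≠ 0 := fun z hz =>
    ne_zero_of_mem_sphere hR.ne' ⟨z, hz⟩
  have haz : ∀ z ∈ sphere (0 : ℂ) R, 1 + a * z ≠ 0 := fun z hz =>
    one_add_mul_ne_zero_of_norm_le ha (mem_sphere_zero_iff_norm.mp hz).le
  rw [circleIntegral.integral_congr hR.le fun z hzs =>
      div_pow_succ_mul_one_add_mul_eq n (hz z hzs) (haz z hzs),
    circleIntegral.integral_add, circleIntegral_eval_div_pow_succ _ _ hR,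
    circleIntegral_eval_div_one_add_mul _ hR.le ha, add_zero]
  · exact ContinuousOn.circleIntegrable hR.le <|
      (by fun_prop : Continuous _).continuousOn.div (by fun_prop) fun z hzs =>
        pow_ne_zero _ (hz z hzs)
  · exact ContinuousOn.circleIntegrable hR.le <|
      (by fun_prop : Continuous _).continuousOn.div (by fun_prop) haz

theorem coeff_truncatedNumerator (a : ℂ) (n : ℕ) :
    (truncatedNumerator a n).coeff n =
      ∑ j ∈ range (n + 1), a * (-a) ^ j * (n + 2).choose (j + 2) := by
  simp only [truncatedNumerator, mul_assoc, coeff_C_mul, mul_sum, finsetSum_coeff, mul_pow,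
    ← C_pow]
  refine sum_congr rfl fun j hj => ?_
  have hjn : j ≤ n := Nat.lt_succ_iff.mp (mem_range.mp hj)
  rw [mul_left_comm, coeff_C_mul, coeff_mul_X_pow', if_pos hjn, coeff_one_add_X_pow,
    Nat.choose_symm_of_eq_add (by omega : n + 2 = n - j + (j + 2))]

/-- With `N = n + 2`, this is the Euler number `χ_N` of a smooth hypersurface of degree `a`
in `ℂP^{N-1}`. -/
noncomputable def hypersurfaceEulerNumber (a : ℂ) (n : ℕ) : ℂ :=
  ((1 - a) ^ (n + 2) - 1 + a * (n + 2)) / a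

theorem coeff_truncatedNumerator_eq_hypersurfaceEulerNumber {a : ℂ} (ha : a ≠ 0) (n : ℕ) :
    (truncatedNumerator a n).coeff n = hypersurfaceEulerNumber a n := by
  have hbinom : (1 - a) ^ (n + 2) = ∑ i ∈ range (n + 3), (-a) ^ i * (n + 2).choose i := by
    rw [sub_eq_neg_add, add_pow]; simp
  have hterm : ∀ j ∈ range (n + 1), a * (a * (-a) ^ j * (n + 2).choose (j + 2)) =
      (-a) ^ (j + 1 + 1) * (n + 2).choose (j + 1 + 1) := fun j _ => by ring
  rw [hypersurfaceEulerNumber, eq_div_iff ha, mul_comm, hbinom, sum_range_succ' _ (n + 2),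
    sum_range_succ' _ (n + 1), coeff_truncatedNumerator, mul_sum, sum_congr rfl hterm]
  simp only [zero_add, Nat.choose_zero_right, Nat.choose_one_right]
  push_cast
  ring

theorem hasSum_hypersurfaceEulerNumber_mul_pow {a t : ℂ} (ha : a ≠ 0) (ht : ‖t‖ < 1)
    (hat : ‖(1 - a) * t‖ < 1) :
    HasSum (fun n : ℕ => hypersurfaceEulerNumber a n * t ^ (n + 1))
      (a * t / ((1 - t) ^ 2 * (1 + (a - 1) * t))) := by
  have h1t : 1 - t ≠ 0 := sub_ne_zero.mpr fun h => by simp [← h] at ht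
  have h1at : 1 - (1 - a) * t ≠ 0 := sub_ne_zero.mpr fun h => by simp [← h] at hat
  have hgeom := (hasSum_geometric_of_norm_lt_one hat).mul_left ((1 - a) ^ 2 * t / a)
  have hgeom' := (hasSum_geometric_of_norm_lt_one ht).mul_left (2 * t - t / a)
  have harith := (hasSum_coe_mul_geometric_of_norm_lt_one ht).mul_left t
  have hval : a * t / ((1 - t) ^ 2 * (1 + (a - 1) * t)) =
      (1 - a) ^ 2 * t / a * (1 - (1 - a) * t)⁻¹ + (2 * t - t / a) * (1 - t)⁻¹ +
        t * (t / (1 - t) ^ 2) := by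
    rw [show 1 + (a - 1) * t = 1 - (1 - a) * t by ring]
    set d := 1 - (1 - a) * t with hd
    field_simp
    rw [hd]
    ring
  rw [hval]
  refine ((hgeom.add hgeom').add harith).congr_fun fun n => ?_
  rw [hypersurfaceEulerNumber, mul_pow]
  field_simp
  ring

theorem norm_one_sub_natCast_mul_lt_one {m : ℕ} (hm : 1 ≤ m) {t : ℂ} (ht : ‖t‖ < 1 / m) :
    ‖(1 - m) * t‖ < 1 := by
  have hm' : (1 : ℝ) ≤ m := by exact_mod_cast hm
  have hnorm : ‖(1 : ℂ) - m‖ = m - 1 := by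
    rw [← Complex.ofReal_natCast, ← ofReal_one, ← ofReal_sub, norm_real, Real.norm_eq_abs,
      abs_of_nonpos (by linarith)]
    ring
  rw [norm_mul, hnorm]
  calc ((m : ℝ) - 1) * ‖t‖ ≤ (m - 1) * (1 / m) := by gcongr
    _ < 1 := by rw [mul_one_div, div_lt_one (by linarith)]; linarith

/-- The generating series of the Euler numbers `χ(Y^N_m)` of smooth degree-`m`
hypersurfaces in `ℂP^{N-1}` equals `mt/((1−t)²(1+(m−1)t))`. -/
theorem euler_number_hypersurface_generating_series
    (m : ℕ) (hm : 1 ≤ m) (ε : ℝ) (hε : 0 < ε) (hεm : ε < 1 / m) :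
    ∃ δ > (0 : ℝ), ∀ t : ℂ, ‖t‖ < δ →
      HasSum
        (fun n : ℕ =>
          ((2 * (Real.pi : ℂ) * I)⁻¹ *
              ∮ z in C(0, ε),
                (m : ℂ) * (1 + z) ^ (n + 2) / (z ^ (n + 1) * (1 + (m : ℂ) * z))) *
            t ^ (n + 1))
        ((m : ℂ) * t / ((1 - t) ^ 2 * (1 + ((m : ℂ) - 1) * t))) := by
  have hm0 : (0 : ℝ) < m := by exact_mod_cast hm
  have hm0' : (m : ℂ) ≠ 0 := by exact_mod_cast hm0.ne'
  have hmε : ‖(m : ℂ)‖ * ε < 1 := by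
    rwa [Complex.norm_natCast, ← lt_div_iff₀' hm0]
  have hχ : ∀ n : ℕ, (2 * (π : ℂ) * I)⁻¹ *
      (∮ z in C(0, ε), (m : ℂ) * (1 + z) ^ (n + 2) / (z ^ (n + 1) * (1 + (m : ℂ) * z))) =
        hypersurfaceEulerNumber m n := fun n => by
    rw [circleIntegral_eq_coeff_truncatedNumerator _ n hε hmε,
      inv_mul_cancel_left₀ two_pi_I_ne_zero,
      coeff_truncatedNumerator_eq_hypersurfaceEulerNumber hm0']
  refine ⟨1 / m, by positivity, fun t ht => ?_⟩
  simp only [hχ]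
  have ht1 : ‖t‖ < 1 := ht.trans_le (by rw [div_le_one hm0]; exact_mod_cast hm)
  exact hasSum_hypersurfaceEulerNumber_mul_pow hm0' ht1 (norm_one_sub_natCast_mul_lt_one hm ht)
end
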